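/- arXiv:1802.06925 — 8 statements merged into one kernel-verified Lean document; each statement's English description precedes it below -/
import Mathlib

section
/- Let g ∈ ℝ^d with g ≠ 0, H a symmetric d×d matrix, σ > 0, and define m(s) = ⟨g, s⟩ + ½⟨s, H s⟩ + (σ/3)‖s‖³. Let K = ⟨H g, g⟩ / ‖g‖² and let s^C = −α^C g minimize m(−α g) over α ≥ 0. Then ‖s^C‖ = (√(K² + 4σ‖g‖) − K) / (2σ). -/
/-!
Along the ray `s = -(t/‖g‖) g` the model is the cubic
`t ↦ -‖g‖ t + (K/2) t² + (σ/3) t³` in the step length `t = ‖s‖`. Its slope `-‖g‖` at `0` is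
negative, so the Cauchy step length `t` is an interior minimizer on `[0, ∞)` and solves
`σ t² + K t - ‖g‖ = 0`; of the two roots of this quadratic it is the nonnegative one.
-/

open scoped RealInnerProductSpace
open Set

theorem IsMinOn.hasDerivAt_nonneg_of_Ici {f : ℝ → ℝ} {a f' : ℝ} (h : IsMinOn f (Ici a) a)
    (hf : HasDerivAt f f' a) : 0 ≤ f' := by
  have hcone : (1 : ℝ) ∈ posTangentConeAt (Ici a) a :=
    mem_posTangentConeAt_of_segment_subset (by simp [segment_eq_Icc, Icc_subset_Ici_self])
  simpa using h.localize.hasFDerivWithinAt_nonneg hf.hasDerivWithinAt.hasFDerivWithinAt hcone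

theorem eq_pos_root_of_quadratic {σ K n t : ℝ} (hσ : 0 < σ) (hn : 0 < n) (ht : 0 ≤ t)
    (h : σ * t ^ 2 + K * t - n = 0) :
    t = (Real.sqrt (K ^ 2 + 4 * σ * n) - K) / (2 * σ) := by
  have hdisc :
      discrim σ K (-n) = Real.sqrt (K ^ 2 + 4 * σ * n) * Real.sqrt (K ^ 2 + 4 * σ * n) := by
    rw [Real.mul_self_sqrt (by positivity), discrim]
    ring
  rcases (quadratic_eq_zero_iff hσ.ne' hdisc t).1 (by linear_combination h) with h | h
  · rw [h]; ring
  · have hneg : -Real.sqrt (K ^ 2 + 4 * σ * n) < K := Real.neg_sqrt_lt_of_sq_lt (by nlinarith)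
    have : t < 0 := by rw [h]; exact div_neg_of_neg_of_pos (by linarith) (by positivity)
    linarith

noncomputable def rayModel (n K σ t : ℝ) : ℝ := -n * t + K / 2 * t ^ 2 + σ / 3 * t ^ 3

theorem hasDerivAt_rayModel (n K σ t : ℝ) :
    HasDerivAt (rayModel n K σ) (-n + K * t + σ * t ^ 2) t := by
  show HasDerivAt (fun t => -n * t + K / 2 * t ^ 2 + σ / 3 * t ^ 3) _ t
  refine ((((hasDerivAt_id' t).const_mul (-n)).add ((hasDerivAt_pow 2 t).const_mul (K / 2))).add
    ((hasDerivAt_pow 3 t).const_mul (σ / 3))).congr_deriv ?_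
  norm_num
  ring

theorem rayModel_root_of_isMinOn {n K σ t : ℝ} (hn : 0 < n)
    (hmin : IsMinOn (rayModel n K σ) (Ici 0) t) (ht : 0 ≤ t) :
    σ * t ^ 2 + K * t - n = 0 := by
  rcases ht.eq_or_lt with rfl | ht
  · have := hmin.hasDerivAt_nonneg_of_Ici (hasDerivAt_rayModel n K σ 0)
    norm_num at this
    linarith
  · have := (hmin.isLocalMin (Ici_mem_nhds ht)).hasDerivAt_eq_zero (hasDerivAt_rayModel n K σ t)
    linarith

theorem cubicModel_neg_smul_eq_rayModel {E : Type*} [NormedAddCommGroup E] [InnerProductSpace ℝ E]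
    {g : E} (hg : g ≠ 0) (H : E →L[ℝ] E) (σ : ℝ) {α : ℝ} (hα : 0 ≤ α) :
    ⟪g, -α • g⟫ + (1/2) * ⟪-α • g, H (-α • g)⟫ + (σ/3) * ‖-α • g‖^3
      = rayModel ‖g‖ (⟪H g, g⟫ / ‖g‖^2) σ (α * ‖g‖) := by
  have hg' : ‖g‖ ≠ 0 := norm_ne_zero_iff.2 hg
  rw [norm_smul, Real.norm_eq_abs, abs_neg, abs_of_nonneg hα, map_smul, real_inner_smul_left,
    real_inner_smul_right, real_inner_smul_right, real_inner_self_eq_norm_sq, real_inner_comm g]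
  unfold rayModel
  field_simp

theorem cubic_cauchy_step_length_general
    {d : ℕ} (g : EuclideanSpace ℝ (Fin d)) (hg : g ≠ 0)
    (H : EuclideanSpace ℝ (Fin d) →L[ℝ] EuclideanSpace ℝ (Fin d))
    (σ : ℝ) (hσ : 0 < σ)
    (m : EuclideanSpace ℝ (Fin d) → ℝ)
    (hm : ∀ s, m s = ⟪g, s⟫ + (1/2) * ⟪s, H s⟫ + (σ/3) * ‖s‖^3)
    (K : ℝ) (hK : K = ⟪H g, g⟫ / ‖g‖^2)
    (αC : ℝ) (hαC : 0 ≤ αC)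
    (hmin : ∀ α : ℝ, 0 ≤ α → m (-αC • g) ≤ m (-α • g))
    (sC : EuclideanSpace ℝ (Fin d)) (hsC : sC = -αC • g) :
    ‖sC‖ = (Real.sqrt (K^2 + 4*σ*‖g‖) - K) / (2*σ) := by
  have hn : 0 < ‖g‖ := norm_pos_iff.2 hg
  have hray : ∀ α, 0 ≤ α → m (-α • g) = rayModel ‖g‖ K σ (α * ‖g‖) := fun α hα => by
    rw [hm, hK, cubicModel_neg_smul_eq_rayModel hg H σ hα]
  have hminRay : IsMinOn (rayModel ‖g‖ K σ) (Ici 0) (αC * ‖g‖) := fun t (ht : 0 ≤ t) => by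
    have := hmin (t / ‖g‖) (div_nonneg ht hn.le)
    rwa [hray _ hαC, hray _ (div_nonneg ht hn.le), div_mul_cancel₀ _ hn.ne'] at this
  have hnorm : ‖sC‖ = αC * ‖g‖ := by
    rw [hsC, norm_smul, Real.norm_eq_abs, abs_neg, abs_of_nonneg hαC]
  rw [hnorm]
  exact eq_pos_root_of_quadratic hσ hn (by positivity)
    (rayModel_root_of_isMinOn hn hminRay (by positivity))

/-- The Cauchy step length for the cubic-regularized model equals
`(√(K² + 4σ‖g‖) − K) / (2σ)`. -/
theorem cubic_cauchy_step_length
    {d : ℕ} (g : EuclideanSpace ℝ (Fin d)) (hg : g ≠ 0)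
    (H : EuclideanSpace ℝ (Fin d) →L[ℝ] EuclideanSpace ℝ (Fin d))
    (hHsym : ∀ u v, ⟪H u, v⟫ = ⟪u, H v⟫)
    (σ : ℝ) (hσ : 0 < σ)
    (m : EuclideanSpace ℝ (Fin d) → ℝ)
    (hm : ∀ s, m s = ⟪g, s⟫ + (1/2) * ⟪s, H s⟫ + (σ/3) * ‖s‖^3)
    (K : ℝ) (hK : K = ⟪H g, g⟫ / ‖g‖^2)
    (αC : ℝ) (hαC : 0 ≤ αC)
    (hmin : ∀ α : ℝ, 0 ≤ α → m (-αC • g) ≤ m (-α • g))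
    (sC : EuclideanSpace ℝ (Fin d)) (hsC : sC = -αC • g) :
    ‖sC‖ = (Real.sqrt (K^2 + 4*σ*‖g‖) - K) / (2*σ) :=
  cubic_cauchy_step_length_general g hg H σ hσ m hm K hK αC hαC hmin sC hsC
end

section
/- Let g ∈ ℝ^d, g ≠ 0, H symmetric, σ > 0, m(s) = ⟨g,s⟩ + ½⟨s, Hs⟩ + (σ/3)‖s‖³, and K = ⟨Hg, g⟩/‖g‖². If s^C minimizes m along −g over α ≥ 0, then −m(s^C) ≥ (‖g‖ / (2√3)) · min{ ‖g‖/|K| , ‖g‖/√(σ‖g‖) }. -/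
open scoped RealInnerProductSpace

/-!
Along the ray `-α g` the model is the cubic
`-α‖g‖² + (α²/2) K ‖g‖² + (σ/3) α³ ‖g‖³`. Take `t = min (1/|K|, 1/√(σ‖g‖))`: then `t K ≤ 1` and
`σ‖g‖ t² ≤ 1`, so at the trial step `α = t/2` the quadratic and cubic terms eat at most `1/8` and
`1/24` of the linear decrease `t‖g‖²/2`, leaving `t‖g‖²/3 ≥ t‖g‖²/(2√3)`. The Cauchy point does at
least as well as any trial step.
-/

lemma cubic_model_neg_smul {E : Type*} [NormedAddCommGroup E] [InnerProductSpace ℝ E]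
    (g : E) (H : E →L[ℝ] E) (σ : ℝ) {α : ℝ} (hα : 0 ≤ α) :
    ⟪g, -α • g⟫ + (1/2) * ⟪-α • g, H (-α • g)⟫ + (σ/3) * ‖-α • g‖^3 =
      -(α * ‖g‖^2) + α^2/2 * ⟪H g, g⟫ + σ/3 * α^3 * ‖g‖^3 := by
  rw [map_smul, real_inner_smul_left, real_inner_smul_right, real_inner_smul_right,
    real_inner_self_eq_norm_sq, real_inner_comm, norm_smul, Real.norm_eq_abs, abs_neg,
    abs_of_nonneg hα]
  ring

lemma half_step_cubic_decrease {G K σ t : ℝ} (ht : 0 ≤ t)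
    (htK : t * K ≤ 1) (htσ : σ * G * t^2 ≤ 1) :
    t * G^2 / 3 ≤ -(-(t/2 * G^2) + (t/2)^2/2 * (K * G^2) + σ/3 * (t/2)^3 * G^3) := by
  have hquad : t * K * (t * G^2) ≤ t * G^2 := mul_le_of_le_one_left (by positivity) htK
  have hcubic : σ * G * t^2 * (t * G^2) ≤ t * G^2 := mul_le_of_le_one_left (by positivity) htσ
  nlinarith

lemma three_le_two_mul_sqrt_three : (3 : ℝ) ≤ 2 * Real.sqrt 3 := by
  nlinarith [Real.sq_sqrt (show (0 : ℝ) ≤ 3 by norm_num), Real.sqrt_nonneg 3]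

/-- The `K = 0` branch reads `1/|K|` as `+∞` (Lean's `1/0 = 0` would make the minimum `0`). -/
noncomputable def cauchyStepScale (K r : ℝ) : ℝ :=
  if K = 0 then 1 / Real.sqrt r else min (1 / |K|) (1 / Real.sqrt r)

section cauchyStepScale

variable (K r : ℝ)

lemma cauchyStepScale_nonneg : 0 ≤ cauchyStepScale K r := by
  unfold cauchyStepScale
  split_ifs <;> positivity

lemma cauchyStepScale_le_one_div_sqrt : cauchyStepScale K r ≤ 1 / Real.sqrt r := by
  unfold cauchyStepScale
  split_ifs
  · exact le_rfl
  · exact min_le_right _ _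

lemma cauchyStepScale_mul_le_one : cauchyStepScale K r * K ≤ 1 := by
  unfold cauchyStepScale
  split_ifs with hK
  · simp [hK]
  · calc min (1 / |K|) (1 / Real.sqrt r) * K ≤ min (1 / |K|) (1 / Real.sqrt r) * |K| :=
          mul_le_mul_of_nonneg_left (le_abs_self K) (by positivity)
      _ ≤ 1 / |K| * |K| := mul_le_mul_of_nonneg_right (min_le_left _ _) (abs_nonneg K)
      _ = 1 := one_div_mul_cancel (abs_ne_zero.mpr hK)

lemma mul_cauchyStepScale_sq_le_one : r * cauchyStepScale K r ^ 2 ≤ 1 := by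
  have hnonneg := cauchyStepScale_nonneg K r
  rcases le_or_gt r 0 with hr | hr
  · nlinarith [sq_nonneg (cauchyStepScale K r)]
  · have hle := (le_div_iff₀ (Real.sqrt_pos.mpr hr)).mp (cauchyStepScale_le_one_div_sqrt K r)
    have hsq := mul_self_le_mul_self (by positivity) hle
    nlinarith [Real.sq_sqrt hr.le]

lemma mul_cauchyStepScale {G : ℝ} (hG : 0 ≤ G) :
    G * cauchyStepScale K r =
      if K = 0 then G / Real.sqrt r else min (G / |K|) (G / Real.sqrt r) := by
  unfold cauchyStepScale
  split_ifs
  · exact mul_one_div G _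
  · rw [mul_min_of_nonneg _ _ hG, mul_one_div, mul_one_div]

end cauchyStepScale

theorem cubic_cauchy_descent_general
    {d : ℕ} (g : EuclideanSpace ℝ (Fin d))
    (H : EuclideanSpace ℝ (Fin d) →L[ℝ] EuclideanSpace ℝ (Fin d))
    (σ : ℝ)
    (m : EuclideanSpace ℝ (Fin d) → ℝ)
    (hm : ∀ s, m s = ⟪g, s⟫ + (1/2) * ⟪s, H s⟫ + (σ/3) * ‖s‖^3)
    (K : ℝ) (hK : K = ⟪H g, g⟫ / ‖g‖^2)
    (αC : ℝ)
    (hmin : ∀ α : ℝ, 0 ≤ α → m (-αC • g) ≤ m (-α • g))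
    (sC : EuclideanSpace ℝ (Fin d)) (hsC : sC = -αC • g) :
    -m sC ≥ (‖g‖ / (2 * Real.sqrt 3)) *
      (if K = 0 then ‖g‖ / Real.sqrt (σ * ‖g‖)
       else min (‖g‖ / |K|) (‖g‖ / Real.sqrt (σ * ‖g‖))) := by
  set t := cauchyStepScale K (σ * ‖g‖)
  have ht : 0 ≤ t := cauchyStepScale_nonneg _ _
  have hHg : ⟪H g, g⟫ = K * ‖g‖^2 := by
    rw [hK, div_mul_cancel_of_imp]
    intro h
    rw [sq_eq_zero_iff, norm_eq_zero] at h
    simp [h]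
  have htrial : t * ‖g‖^2 / 3 ≤ -m (-(t/2) • g) := by
    rw [hm, cubic_model_neg_smul g H σ (by positivity), hHg]
    exact half_step_cubic_decrease ht (cauchyStepScale_mul_le_one _ _)
      (by simpa only [mul_assoc] using mul_cauchyStepScale_sq_le_one K (σ * ‖g‖))
  calc ‖g‖ / (2 * Real.sqrt 3) * (if K = 0 then ‖g‖ / Real.sqrt (σ * ‖g‖)
          else min (‖g‖ / |K|) (‖g‖ / Real.sqrt (σ * ‖g‖)))
        = t * ‖g‖^2 / (2 * Real.sqrt 3) := by
          rw [← mul_cauchyStepScale _ _ (norm_nonneg g)]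
          ring
    _ ≤ t * ‖g‖^2 / 3 :=
          div_le_div_of_nonneg_left (by positivity) (by norm_num) three_le_two_mul_sqrt_three
    _ ≤ -m (-(t/2) • g) := htrial
    _ ≤ -m sC := hsC ▸ neg_le_neg (hmin _ (by positivity))

/-- Cauchy point descent bound for the cubic model:
`−m(s^C) ≥ (‖g‖/(2√3)) · min{‖g‖/|K|, ‖g‖/√(σ‖g‖)}`,
where for `K = 0` the term `‖g‖/|K|` is interpreted as `+∞`. -/
theorem cubic_cauchy_descent
    {d : ℕ} (g : EuclideanSpace ℝ (Fin d)) (hg : g ≠ 0)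
    (H : EuclideanSpace ℝ (Fin d) →L[ℝ] EuclideanSpace ℝ (Fin d))
    (hHsym : ∀ u v, ⟪H u, v⟫ = ⟪u, H v⟫)
    (σ : ℝ) (hσ : 0 < σ)
    (m : EuclideanSpace ℝ (Fin d) → ℝ)
    (hm : ∀ s, m s = ⟪g, s⟫ + (1/2) * ⟪s, H s⟫ + (σ/3) * ‖s‖^3)
    (K : ℝ) (hK : K = ⟪H g, g⟫ / ‖g‖^2)
    (αC : ℝ) (hαC : 0 ≤ αC)
    (hmin : ∀ α : ℝ, 0 ≤ α → m (-αC • g) ≤ m (-α • g))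
    (sC : EuclideanSpace ℝ (Fin d)) (hsC : sC = -αC • g) :
    -m sC ≥ (‖g‖ / (2 * Real.sqrt 3)) *
      (if K = 0 then ‖g‖ / Real.sqrt (σ * ‖g‖)
       else min (‖g‖ / |K|) (‖g‖ / Real.sqrt (σ * ‖g‖))) :=
  cubic_cauchy_descent_general g H σ m hm K hK αC hmin sC hsC
end

section
/- Let g ∈ ℝ^d, g ≠ 0, H symmetric, σ > 0, m(s) = ⟨g,s⟩ + ½⟨s,Hs⟩ + (σ/3)‖s‖³, K = ⟨Hg,g⟩/‖g‖², and s^C the Cauchy point (minimizer of m along −g over α ≥ 0). Then −m(s^C) ≥ (1/12) ‖s^C‖² (√(K² + 4σ‖g‖) − K). -/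
open scoped RealInnerProductSpace

/-!
Along the ray `s = -α g` the model is a cubic polynomial in `α`, so the Cauchy point `s = s^C`
with `α^C > 0` is a critical point: `⟪g, s⟫ + ⟪s, H s⟫ + σ‖s‖³ = 0`. Eliminating `⟪s, H s⟫`
gives `-m(s) = (σ/6)‖s‖³ - ½⟪g, s⟫ ≥ (σ/6)‖s‖³`. Divided by `α‖g‖²`, the same equation says that
`α^C` is the positive root of `σ‖g‖α² + Kα = 1`, i.e. `√(K² + 4σ‖g‖) - K = 2σ‖s^C‖`, and then the
claimed bound is exactly `(σ/6)‖s^C‖³`.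
-/

theorem sqrt_sq_add_four_mul_sub_eq_of_root {a b x : ℝ} (ha : 0 ≤ a) (hx : 0 < x)
    (h : a * x ^ 2 + b * x = 1) : √(b ^ 2 + 4 * a) - b = 2 * a * x := by
  have hsq : b ^ 2 + 4 * a = (b + 2 * a * x) ^ 2 := by linear_combination (-4 * a) * h
  have hnonneg : 0 ≤ b + 2 * a * x := by
    have : x * (b + 2 * a * x) = 1 + a * x ^ 2 := by linear_combination h
    nlinarith [mul_nonneg ha (sq_nonneg x)]
  rw [hsq, Real.sqrt_sq hnonneg]
  ring

section CubicModel

variable {E : Type*} [NormedAddCommGroup E] [InnerProductSpace ℝ E]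

noncomputable def cubicModel (g : E) (H : E →L[ℝ] E) (σ : ℝ) (s : E) : ℝ :=
  ⟪g, s⟫ + (1 / 2) * ⟪s, H s⟫ + (σ / 3) * ‖s‖ ^ 3

variable (g : E) (H : E →L[ℝ] E) (σ : ℝ)

theorem neg_cubicModel_eq_of_stationary {s : E} (hs : ⟪g, s⟫ + ⟪s, H s⟫ + σ * ‖s‖ ^ 3 = 0) :
    -cubicModel g H σ s = σ / 6 * ‖s‖ ^ 3 - 1 / 2 * ⟪g, s⟫ := by
  unfold cubicModel
  linear_combination (-1 / 2 : ℝ) * hs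

theorem cubicModel_smul_of_nonneg (v : E) {t : ℝ} (ht : 0 ≤ t) :
    cubicModel g H σ (t • v) = t * ⟪g, v⟫ + t ^ 2 / 2 * ⟪v, H v⟫ + σ / 3 * ‖v‖ ^ 3 * t ^ 3 := by
  simp only [cubicModel, map_smul, real_inner_smul_left, real_inner_smul_right, norm_smul,
    Real.norm_of_nonneg ht]
  ring

theorem stationary_of_isMinOn_ray (v : E) {t : ℝ} (ht : 0 < t)
    (hmin : IsMinOn (fun τ => cubicModel g H σ (τ • v)) (Set.Ici 0) t) :
    ⟪g, t • v⟫ + ⟪t • v, H (t • v)⟫ + σ * ‖t • v‖ ^ 3 = 0 := by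
  set φ : ℝ → ℝ := fun τ => τ * ⟪g, v⟫ + τ ^ 2 / 2 * ⟪v, H v⟫ + σ / 3 * ‖v‖ ^ 3 * τ ^ 3
  have hφ : IsLocalMin φ t := by
    refine (hmin.isLocalMin (Ici_mem_nhds ht)).congr ?_
    filter_upwards [Ici_mem_nhds ht] with τ hτ using cubicModel_smul_of_nonneg g H σ v hτ
  have hderiv : HasDerivAt φ (⟪g, v⟫ + t * ⟪v, H v⟫ + σ * ‖v‖ ^ 3 * t ^ 2) t := by
    have := (((hasDerivAt_id t).mul_const ⟪g, v⟫).add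
      (((hasDerivAt_pow 2 t).div_const 2).mul_const ⟪v, H v⟫)).add
      ((hasDerivAt_pow 3 t).const_mul (σ / 3 * ‖v‖ ^ 3))
    exact this.congr_deriv (by norm_num; ring)
  have hcrit := hφ.hasDerivAt_eq_zero hderiv
  simp only [map_smul, real_inner_smul_left, real_inner_smul_right, norm_smul,
    Real.norm_of_nonneg ht.le]
  linear_combination t * hcrit

theorem quadratic_eq_one_of_stationary_neg_smul {g : E} (hg : g ≠ 0) {α : ℝ} (hα : 0 < α)
    (hs : ⟪g, -α • g⟫ + ⟪-α • g, H (-α • g)⟫ + σ * ‖-α • g‖ ^ 3 = 0) :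
    σ * ‖g‖ * α ^ 2 + ⟪H g, g⟫ / ‖g‖ ^ 2 * α = 1 := by
  simp only [map_smul, real_inner_smul_left, real_inner_smul_right, real_inner_self_eq_norm_sq,
    norm_smul, Real.norm_eq_abs, abs_neg, abs_of_pos hα, real_inner_comm (H g) g] at hs
  have hfactor : α * ‖g‖ ^ 2 * (σ * ‖g‖ * α ^ 2 + ⟪H g, g⟫ / ‖g‖ ^ 2 * α - 1) = 0 := by
    field_simp
    linear_combination hs
  linarith [(mul_eq_zero.mp hfactor).resolve_left (by positivity)]

end CubicModel

theorem cubic_cauchy_descent'_general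
    {d : ℕ} (g : EuclideanSpace ℝ (Fin d))
    (H : EuclideanSpace ℝ (Fin d) →L[ℝ] EuclideanSpace ℝ (Fin d))
    (σ : ℝ) (hσ : 0 < σ)
    (m : EuclideanSpace ℝ (Fin d) → ℝ)
    (hm : ∀ s, m s = ⟪g, s⟫ + (1/2) * ⟪s, H s⟫ + (σ/3) * ‖s‖^3)
    (K : ℝ) (hK : K = ⟪H g, g⟫ / ‖g‖^2)
    (αC : ℝ) (hαC : 0 ≤ αC)
    (hmin : ∀ α : ℝ, 0 ≤ α → m (-αC • g) ≤ m (-α • g))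
    (sC : EuclideanSpace ℝ (Fin d)) (hsC : sC = -αC • g) :
    -m sC ≥ (1/12) * ‖sC‖^2 * (Real.sqrt (K^2 + 4*σ*‖g‖) - K) := by
  obtain rfl : m = cubicModel g H σ := funext hm
  subst hsC
  rcases eq_or_ne (-αC • g) 0 with h0 | h0
  · simp [h0, cubicModel]
  obtain ⟨hα, hg⟩ := smul_ne_zero_iff.mp h0
  replace hα : 0 < αC := hαC.lt_of_ne' (neg_ne_zero.mp hα)
  have hstat : ⟪g, -αC • g⟫ + ⟪-αC • g, H (-αC • g)⟫ + σ * ‖-αC • g‖ ^ 3 = 0 := by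
    simpa only [smul_neg, neg_smul] using stationary_of_isMinOn_ray g H σ (-g) hα fun τ hτ => by
      simpa only [Set.mem_ofPred_eq, smul_neg, ← neg_smul] using hmin τ hτ
  have hroot := quadratic_eq_one_of_stationary_neg_smul H σ hg hα hstat
  rw [← hK] at hroot
  have hnorm : ‖-αC • g‖ = αC * ‖g‖ := by rw [norm_smul, Real.norm_eq_abs, abs_neg, abs_of_pos hα]
  have hinner : ⟪g, -αC • g⟫ = -αC * ‖g‖ ^ 2 := by
    rw [real_inner_smul_right, real_inner_self_eq_norm_sq]
  rw [ge_iff_le, mul_assoc 4 σ, neg_cubicModel_eq_of_stationary g H σ hstat,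
    sqrt_sq_add_four_mul_sub_eq_of_root (by positivity) hα hroot, hinner, hnorm]
  nlinarith [mul_pos hα (pow_pos (norm_pos_iff.mpr hg) 2)]

/-- Cauchy point descent bound for the cubic model:
`−m(s^C) ≥ (1/12)‖s^C‖²(√(K² + 4σ‖g‖) − K)`. -/
theorem cubic_cauchy_descent'
    {d : ℕ} (g : EuclideanSpace ℝ (Fin d)) (hg : g ≠ 0)
    (H : EuclideanSpace ℝ (Fin d) →L[ℝ] EuclideanSpace ℝ (Fin d))
    (hHsym : ∀ u v, ⟪H u, v⟫ = ⟪u, H v⟫)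
    (σ : ℝ) (hσ : 0 < σ)
    (m : EuclideanSpace ℝ (Fin d) → ℝ)
    (hm : ∀ s, m s = ⟪g, s⟫ + (1/2) * ⟪s, H s⟫ + (σ/3) * ‖s‖^3)
    (K : ℝ) (hK : K = ⟪H g, g⟫ / ‖g‖^2)
    (αC : ℝ) (hαC : 0 ≤ αC)
    (hmin : ∀ α : ℝ, 0 ≤ α → m (-αC • g) ≤ m (-α • g))
    (sC : EuclideanSpace ℝ (Fin d)) (hsC : sC = -αC • g) :
    -m sC ≥ (1/12) * ‖sC‖^2 * (Real.sqrt (K^2 + 4*σ*‖g‖) - K) :=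
  cubic_cauchy_descent'_general g H σ hσ m hm K hK αC hαC hmin sC hsC
end

section
/- Let g ∈ ℝ^d, H a symmetric d×d matrix, Δ > 0, and m(s) = ⟨g, s⟩ + ½⟨s, H s⟩. If s^C = −α^C g/‖g‖ where α^C = argmin_{0 ≤ α ≤ Δ} m(−α g/‖g‖), then −m(s^C) ≥ ½ ‖g‖ min{ ‖g‖ / (1 + ‖H‖), Δ }. -/
/-!
Compare the Cauchy point with the step of length `t = min (‖g‖ / (1 + ‖H‖)) Δ` along `-g`.
That step lies in the search interval, and along `-g` the model decreases linearly at rate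
`‖g‖` while the curvature term is at most `½ ‖H‖ t² ≤ ½ t ‖g‖`, because `t ‖H‖ ≤ ‖g‖`.
-/

open scoped RealInnerProductSpace

section SteepestDescentStep

variable {E : Type*} [NormedAddCommGroup E] [InnerProductSpace ℝ E]

theorem real_inner_apply_self_le_opNorm_mul_sq (H : E →L[ℝ] E) (s : E) :
    ⟪s, H s⟫ ≤ ‖H‖ * ‖s‖ ^ 2 :=
  calc ⟪s, H s⟫ ≤ ‖s‖ * ‖H s‖ := real_inner_le_norm _ _
    _ ≤ ‖s‖ * (‖H‖ * ‖s‖) := by gcongr; exact H.le_opNorm s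
    _ = ‖H‖ * ‖s‖ ^ 2 := by ring

theorem real_inner_neg_div_norm_smul_self (g : E) (t : ℝ) :
    ⟪g, -(t / ‖g‖) • g⟫ = -(t * ‖g‖) := by
  rcases eq_or_ne g 0 with rfl | hg
  · simp
  · have hn : ‖g‖ ≠ 0 := norm_ne_zero_iff.mpr hg
    rw [real_inner_smul_right, real_inner_self_eq_norm_sq]
    field_simp

theorem norm_neg_div_norm_smul_self_le (g : E) {t : ℝ} (ht : 0 ≤ t) :
    ‖-(t / ‖g‖) • g‖ ≤ t := by
  rcases eq_or_ne g 0 with rfl | hg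
  · simpa using ht
  · have hn : ‖g‖ ≠ 0 := norm_ne_zero_iff.mpr hg
    rw [norm_smul, norm_neg, Real.norm_eq_abs, abs_div, abs_norm, abs_of_nonneg ht,
      div_mul_cancel₀ _ hn]

theorem model_neg_div_norm_smul_le (g : E) (H : E →L[ℝ] E) {t : ℝ} (ht : 0 ≤ t)
    (htH : t * ‖H‖ ≤ ‖g‖) :
    ⟪g, -(t / ‖g‖) • g⟫ + (1/2) * ⟪-(t / ‖g‖) • g, H (-(t / ‖g‖) • g)⟫ ≤
      -((1/2) * ‖g‖ * t) := by
  have hcurv : ⟪-(t / ‖g‖) • g, H (-(t / ‖g‖) • g)⟫ ≤ t * ‖g‖ :=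
    calc ⟪-(t / ‖g‖) • g, H (-(t / ‖g‖) • g)⟫ ≤ ‖H‖ * ‖-(t / ‖g‖) • g‖ ^ 2 :=
          real_inner_apply_self_le_opNorm_mul_sq H _
      _ ≤ ‖H‖ * t ^ 2 := by gcongr; exact norm_neg_div_norm_smul_self_le g ht
      _ = t * (t * ‖H‖) := by ring
      _ ≤ t * ‖g‖ := by gcongr
  rw [real_inner_neg_div_norm_smul_self]
  linarith

end SteepestDescentStep

theorem min_div_one_add_mul_le {a b : ℝ} (c : ℝ) (ha : 0 ≤ a) (hb : 0 ≤ b) :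
    min (a / (1 + b)) c * b ≤ a :=
  calc min (a / (1 + b)) c * b ≤ a / (1 + b) * b := by gcongr; exact min_le_left _ _
    _ ≤ a / (1 + b) * (1 + b) := by gcongr; linarith
    _ = a := div_mul_cancel₀ a (by positivity)

theorem tr_cauchy_descent_general
    {d : ℕ} (g : EuclideanSpace ℝ (Fin d))
    (H : EuclideanSpace ℝ (Fin d) →L[ℝ] EuclideanSpace ℝ (Fin d))
    (Δ : ℝ)
    (m : EuclideanSpace ℝ (Fin d) → ℝ)
    (hm : ∀ s, m s = ⟪g, s⟫ + (1/2) * ⟪s, H s⟫)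
    (αC : ℝ) (hαC : αC ∈ Set.Icc (0:ℝ) Δ)
    (hmin : ∀ α ∈ Set.Icc (0:ℝ) Δ,
      m (-(αC / ‖g‖) • g) ≤ m (-(α / ‖g‖) • g))
    (sC : EuclideanSpace ℝ (Fin d)) (hsC : sC = -(αC / ‖g‖) • g) :
    -m sC ≥ (1/2) * ‖g‖ * min (‖g‖ / (1 + ‖H‖)) Δ := by
  set t := min (‖g‖ / (1 + ‖H‖)) Δ
  have hΔ : 0 ≤ Δ := hαC.1.trans hαC.2
  have ht : t ∈ Set.Icc (0:ℝ) Δ :=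
    ⟨le_min (by positivity) hΔ, min_le_right _ _⟩
  have hdescent : m (-(t / ‖g‖) • g) ≤ -((1/2) * ‖g‖ * t) := by
    rw [hm]
    exact model_neg_div_norm_smul_le g H ht.1
      (min_div_one_add_mul_le Δ (norm_nonneg g) (norm_nonneg H))
  have := hmin t ht
  rw [← hsC] at this
  linarith

/-- Cauchy point descent for the trust-region model:
`−m(s^C) ≥ ½‖g‖ min{‖g‖/(1+‖H‖), Δ}`. -/
theorem tr_cauchy_descent
    {d : ℕ} (g : EuclideanSpace ℝ (Fin d)) (hg : g ≠ 0)
    (H : EuclideanSpace ℝ (Fin d) →L[ℝ] EuclideanSpace ℝ (Fin d))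
    (hHsym : ∀ u v, ⟪H u, v⟫ = ⟪u, H v⟫)
    (Δ : ℝ) (hΔ : 0 < Δ)
    (m : EuclideanSpace ℝ (Fin d) → ℝ)
    (hm : ∀ s, m s = ⟪g, s⟫ + (1/2) * ⟪s, H s⟫)
    (αC : ℝ) (hαC : αC ∈ Set.Icc (0:ℝ) Δ)
    (hmin : ∀ α ∈ Set.Icc (0:ℝ) Δ,
      m (-(αC / ‖g‖) • g) ≤ m (-(α / ‖g‖) • g))
    (sC : EuclideanSpace ℝ (Fin d)) (hsC : sC = -(αC / ‖g‖) • g) :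
    -m sC ≥ (1/2) * ‖g‖ * min (‖g‖ / (1 + ‖H‖)) Δ :=
  tr_cauchy_descent_general g H Δ m hm αC hαC hmin sC hsC
end

section
/- Let H be a symmetric d×d matrix with λ_min(H) < 0, g ∈ ℝ^d, Δ > 0, ν ∈ (0,1], and u a unit vector with ⟨g, u⟩ ≤ 0 and ⟨u, Hu⟩ ≤ −ν|λ_min(H)|. If s = α* u with α* = argmin_{|α| ≤ Δ} [ α⟨g,u⟩ + (α²/2)⟨u,Hu⟩ ], then −m(s) ≥ (ν/2)|λ_min(H)| Δ², where m(s) = ⟨g,s⟩ + ½⟨s,Hs⟩. -/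
open scoped RealInnerProductSpace

section QuadraticModel

variable {E F : Type*} [NormedAddCommGroup E] [InnerProductSpace ℝ E]
  [FunLike F E E] [LinearMapClass F ℝ E E]

noncomputable def trModel (g : E) (H : F) (s : E) : ℝ :=
  ⟪g, s⟫ + (1/2) * ⟪s, H s⟫

lemma trModel_smul (g : E) (H : F) (α : ℝ) (u : E) :
    trModel g H (α • u) = α * ⟪g, u⟫ + α ^ 2 / 2 * ⟪u, H u⟫ := by
  rw [trModel, map_smul, real_inner_smul_right, real_inner_smul_left, real_inner_smul_right]
  ring

lemma le_neg_trModel_smul {g u : E} {H : F} {Δ c : ℝ} (hΔ : 0 ≤ Δ) (hgu : ⟪g, u⟫ ≤ 0)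
    (hcurv : ⟪u, H u⟫ ≤ -c) :
    c / 2 * Δ ^ 2 ≤ -trModel g H (Δ • u) := by
  have hlin : Δ * ⟪g, u⟫ ≤ 0 := mul_nonpos_of_nonneg_of_nonpos hΔ hgu
  have hquad : Δ ^ 2 * ⟪u, H u⟫ ≤ Δ ^ 2 * -c := mul_le_mul_of_nonneg_left hcurv (sq_nonneg Δ)
  rw [trModel_smul]
  linarith

end QuadraticModel

theorem tr_eigen_descent_general
    {d : ℕ} (g : EuclideanSpace ℝ (Fin d))
    (H : EuclideanSpace ℝ (Fin d) →L[ℝ] EuclideanSpace ℝ (Fin d))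
    (Δ ν lamMin : ℝ) (hΔ : 0 < Δ)
    (u : EuclideanSpace ℝ (Fin d))
    (hgu : ⟪g, u⟫ ≤ 0)
    (hcurv : ⟪u, H u⟫ ≤ -ν * |lamMin|)
    (m : EuclideanSpace ℝ (Fin d) → ℝ)
    (hm : ∀ s, m s = ⟪g, s⟫ + (1/2) * ⟪s, H s⟫)
    (αstar : ℝ)
    (hmin : ∀ α ∈ Set.Icc (-Δ) Δ, m (αstar • u) ≤ m (α • u))
    (s : EuclideanSpace ℝ (Fin d)) (hs : s = αstar • u) :
    -m s ≥ (ν/2) * |lamMin| * Δ^2 := by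
  have hm' : m = trModel g H := funext hm
  subst hs hm'
  -- the minimiser over `[-Δ, Δ]` does at least as well as the boundary point `α = Δ`
  calc (ν/2) * |lamMin| * Δ^2 = ν * |lamMin| / 2 * Δ ^ 2 := by ring
    _ ≤ -trModel g H (Δ • u) := le_neg_trModel_smul hΔ.le hgu (by linarith)
    _ ≤ -trModel g H (αstar • u) := neg_le_neg (hmin Δ ⟨by linarith, le_rfl⟩)

/-- Eigen point descent for the trust-region model:
`−m(s) ≥ (ν/2)|λ_min(H)|Δ²`. -/
theorem tr_eigen_descent
    {d : ℕ} (g : EuclideanSpace ℝ (Fin d))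
    (H : EuclideanSpace ℝ (Fin d) →L[ℝ] EuclideanSpace ℝ (Fin d))
    (hHsym : ∀ u v, ⟪H u, v⟫ = ⟪u, H v⟫)
    (Δ ν lamMin : ℝ) (hΔ : 0 < Δ) (hν : ν ∈ Set.Ioc (0:ℝ) 1)
    (hlam_attained : ∃ v, ‖v‖ = 1 ∧ ⟪v, H v⟫ = lamMin)
    (hlam_lb : ∀ v : EuclideanSpace ℝ (Fin d), ‖v‖ = 1 → lamMin ≤ ⟪v, H v⟫)
    (hlam_neg : lamMin < 0)
    (u : EuclideanSpace ℝ (Fin d)) (hu : ‖u‖ = 1)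
    (hgu : ⟪g, u⟫ ≤ 0)
    (hcurv : ⟪u, H u⟫ ≤ -ν * |lamMin|)
    (m : EuclideanSpace ℝ (Fin d) → ℝ)
    (hm : ∀ s, m s = ⟪g, s⟫ + (1/2) * ⟪s, H s⟫)
    (αstar : ℝ) (hα : αstar ∈ Set.Icc (-Δ) Δ)
    (hmin : ∀ α ∈ Set.Icc (-Δ) Δ, m (αstar • u) ≤ m (α • u))
    (s : EuclideanSpace ℝ (Fin d)) (hs : s = αstar • u) :
    -m s ≥ (ν/2) * |lamMin| * Δ^2 :=
  tr_eigen_descent_general g H Δ ν lamMin hΔ u hgu hcurv m hm αstar hmin s hs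
end

section
/- Let g ≠ 0, K = ⟨Hg,g⟩/‖g‖² > 0, σ > 0. Then (√(K² + 4σ‖g‖) − K)/(2σ) = 2‖g‖ / (√(K² + 4σ‖g‖) + K), and consequently if K² ≥ σ‖g‖ then ‖s^C‖ ≤ ‖g‖/K, while if K² ≤ σ‖g‖ then ‖s^C‖ ≤ ‖g‖/√(σ‖g‖). -/
/-!
Multiplying numerator and denominator by `√(K² + 4σ‖g‖) + K` gives the second form of the step
length. Its denominator is at least `2K` and at least `2√(σ‖g‖)`, because `√(K² + 4σ‖g‖)`
dominates both `K = √(K²)` and `2√(σ‖g‖) = √(4σ‖g‖)`.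
-/

open scoped RealInnerProductSpace

section CauchyStepLength

variable {σ K a : ℝ}

theorem le_sqrt_sq_add_mul (hσ : 0 ≤ σ) (ha : 0 ≤ a) (hK : 0 < K) :
    K ≤ √(K ^ 2 + 4 * σ * a) :=
  (Real.le_sqrt' hK).2 (le_add_of_nonneg_right (by positivity))

theorem two_mul_sqrt_mul_le_sqrt_sq_add_mul (hσ : 0 ≤ σ) (ha : 0 ≤ a) :
    2 * √(σ * a) ≤ √(K ^ 2 + 4 * σ * a) := by
  refine (Real.le_sqrt (by positivity) (by positivity)).2 ?_
  rw [mul_pow, Real.sq_sqrt (by positivity)]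
  nlinarith [sq_nonneg K]

theorem sqrt_sq_add_mul_sub_div_eq (hσ : 0 < σ) (ha : 0 ≤ a) (hK : 0 < K) :
    (√(K ^ 2 + 4 * σ * a) - K) / (2 * σ) = 2 * a / (√(K ^ 2 + 4 * σ * a) + K) := by
  have hroot : √(K ^ 2 + 4 * σ * a) ^ 2 = K ^ 2 + 4 * σ * a := Real.sq_sqrt (by positivity)
  rw [div_eq_div_iff (by positivity) (by positivity)]
  linear_combination hroot

theorem two_mul_div_sqrt_sq_add_mul_add_le_div (hσ : 0 ≤ σ) (ha : 0 ≤ a) (hK : 0 < K) :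
    2 * a / (√(K ^ 2 + 4 * σ * a) + K) ≤ a / K :=
  calc 2 * a / (√(K ^ 2 + 4 * σ * a) + K)
      ≤ 2 * a / (2 * K) := div_le_div_of_nonneg_left (by positivity) (by positivity)
        (by linarith [le_sqrt_sq_add_mul hσ ha hK])
    _ = a / K := mul_div_mul_left _ _ two_ne_zero

theorem two_mul_div_sqrt_sq_add_mul_add_le_div_sqrt (hσ : 0 < σ) (ha : 0 ≤ a) (hK : 0 ≤ K) :
    2 * a / (√(K ^ 2 + 4 * σ * a) + K) ≤ a / √(σ * a) := by
  rcases ha.eq_or_lt with rfl | ha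
  · simp
  calc 2 * a / (√(K ^ 2 + 4 * σ * a) + K)
      ≤ 2 * a / (2 * √(σ * a)) := div_le_div_of_nonneg_left (by positivity) (by positivity)
        (by linarith [two_mul_sqrt_mul_le_sqrt_sq_add_mul (K := K) hσ.le ha.le])
    _ = a / √(σ * a) := mul_div_mul_left _ _ two_ne_zero

end CauchyStepLength

theorem cubic_cauchy_step_ub_of_K_pos_general
    {d : ℕ} (g : EuclideanSpace ℝ (Fin d))
    (σ : ℝ) (hσ : 0 < σ)
    (K : ℝ) (hKpos : 0 < K)
    (sC : EuclideanSpace ℝ (Fin d))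
    (hsC : ‖sC‖ = (Real.sqrt (K^2 + 4*σ*‖g‖) - K) / (2*σ)) :
    (Real.sqrt (K^2 + 4*σ*‖g‖) - K) / (2*σ)
      = 2*‖g‖ / (Real.sqrt (K^2 + 4*σ*‖g‖) + K)
    ∧ (K^2 ≥ σ*‖g‖ → ‖sC‖ ≤ ‖g‖ / K)
    ∧ (K^2 ≤ σ*‖g‖ → ‖sC‖ ≤ ‖g‖ / Real.sqrt (σ*‖g‖)) := by
  have hrat := sqrt_sq_add_mul_sub_div_eq hσ (norm_nonneg g) hKpos
  refine ⟨hrat, fun _ => ?_, fun _ => ?_⟩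
  · rw [hsC, hrat]
    exact two_mul_div_sqrt_sq_add_mul_add_le_div hσ.le (norm_nonneg g) hKpos
  · rw [hsC, hrat]
    exact two_mul_div_sqrt_sq_add_mul_add_le_div_sqrt hσ (norm_nonneg g) hKpos.le

/-- For `K > 0`, `(√(K²+4σ‖g‖) − K)/(2σ) = 2‖g‖/(√(K²+4σ‖g‖) + K)`; hence if
`K² ≥ σ‖g‖` then `‖s^C‖ ≤ ‖g‖/K`, while if `K² ≤ σ‖g‖` then
`‖s^C‖ ≤ ‖g‖/√(σ‖g‖)`. -/
theorem cubic_cauchy_step_ub_of_K_pos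
    {d : ℕ} (g : EuclideanSpace ℝ (Fin d)) (hg : g ≠ 0)
    (H : EuclideanSpace ℝ (Fin d) →L[ℝ] EuclideanSpace ℝ (Fin d))
    (hHsym : ∀ u v, ⟪H u, v⟫ = ⟪u, H v⟫)
    (σ : ℝ) (hσ : 0 < σ)
    (K : ℝ) (hK : K = ⟪H g, g⟫ / ‖g‖^2) (hKpos : 0 < K)
    (sC : EuclideanSpace ℝ (Fin d))
    (hsC : ‖sC‖ = (Real.sqrt (K^2 + 4*σ*‖g‖) - K) / (2*σ)) :
    (Real.sqrt (K^2 + 4*σ*‖g‖) - K) / (2*σ)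
      = 2*‖g‖ / (Real.sqrt (K^2 + 4*σ*‖g‖) + K)
    ∧ (K^2 ≥ σ*‖g‖ → ‖sC‖ ≤ ‖g‖ / K)
    ∧ (K^2 ≤ σ*‖g‖ → ‖sC‖ ≤ ‖g‖ / Real.sqrt (σ*‖g‖)) :=
  cubic_cauchy_step_ub_of_K_pos_general g σ hσ K hKpos sC hsC
end

section
/- Let δ_g, δ_H, L > 0, σ ≥ 2L, K ≥ 0, ε > 0, and let s, s^C ∈ ℝ^d with ‖s^C‖ = (√(K² + 4σε') − K)/(2σ) for some ε' ≥ ε. If δ_H ≤ (√(K² + 8Lε) − K)/24 and δ_g ≤ (√(K² + 8Lε) − K)²/(192L), then δ_g‖s‖ + ½δ_H‖s‖² + (L/2 − σ/3)‖s‖³ ≤ δ_g‖s^C‖ + ½δ_H‖s^C‖². -/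
/-!
Write `ρ_σ(g) = (√(K² + 4σg) - K) / (2σ)` for the positive root of `σx² + Kx = g`, so that
`‖sC‖ = ρ_σ(ε')` and the bounds on `δ_H`, `δ_g` read `δ_H ≤ 2L ρ_{2L}(ε) / 12` and
`δ_g ≤ 2L ρ_{2L}(ε)² / 24`. Both `σ ρ_σ(g)` and `σ ρ_σ(g)²` increase with `σ` and `g`, so
`δ_H ≤ σ c / 12` and `δ_g ≤ σ c² / 24` with `c = ‖sC‖`. Then `φ(x) = δ_g + δ_H x / 2 - σ x² / 12`
is nonpositive and decreasing on `[c, ∞)`, which settles long steps; for short steps the cubic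
term is nonpositive and the rest is monotone.
-/

noncomputable def cauchyRadius (K σ g : ℝ) : ℝ :=
  (√(K ^ 2 + 4 * σ * g) - K) / (2 * σ)

section CauchyRadius

variable {K σ σ' g g' : ℝ}

lemma cauchyRadius_nonneg (hσ : 0 ≤ σ) (hg : 0 ≤ g) : 0 ≤ cauchyRadius K σ g := by
  have hK : K ≤ √(K ^ 2 + 4 * σ * g) :=
    (le_abs_self K).trans (Real.abs_le_sqrt (by nlinarith))
  exact div_nonneg (sub_nonneg.2 hK) (by positivity)

lemma mul_cauchyRadius (hσ : σ ≠ 0) :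
    σ * cauchyRadius K σ g = (√(K ^ 2 + 4 * σ * g) - K) / 2 := by
  unfold cauchyRadius
  field_simp

lemma mul_sq_cauchyRadius_add (hσ : σ ≠ 0) (h : 0 ≤ K ^ 2 + 4 * σ * g) :
    σ * cauchyRadius K σ g ^ 2 + K * cauchyRadius K σ g = g := by
  have hw := Real.sq_sqrt h
  unfold cauchyRadius
  generalize √(K ^ 2 + 4 * σ * g) = w at hw
  field_simp
  linear_combination hw

lemma monotone_cauchyRadius (hσ : 0 ≤ σ) : Monotone (cauchyRadius K σ) := fun g g' hgg' =>
  div_le_div_of_nonneg_right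
    (sub_le_sub_right (Real.sqrt_le_sqrt (by nlinarith)) K) (by positivity)

lemma mul_cauchyRadius_le (hσ : 0 < σ) (hσσ' : σ ≤ σ') (hg : 0 ≤ g) (hgg' : g ≤ g') :
    σ * cauchyRadius K σ g ≤ σ' * cauchyRadius K σ' g' := by
  rw [mul_cauchyRadius hσ.ne', mul_cauchyRadius (hσ.trans_le hσσ').ne']
  gcongr
  nlinarith

lemma mul_sq_cauchyRadius_le_of_le_left (hK : 0 ≤ K) (hσ : 0 < σ) (hσσ' : σ ≤ σ')
    (hg : 0 ≤ g) : σ * cauchyRadius K σ g ^ 2 ≤ σ' * cauchyRadius K σ' g ^ 2 := by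
  have hσ' : 0 < σ' := hσ.trans_le hσσ'
  have hx := cauchyRadius_nonneg (K := K) hσ.le hg
  have hy := cauchyRadius_nonneg (K := K) hσ'.le hg
  have ex := mul_sq_cauchyRadius_add (K := K) (g := g) hσ.ne' (by positivity)
  have ey := mul_sq_cauchyRadius_add (K := K) (g := g) hσ'.ne' (by positivity)
  -- the radius decreases in `σ`, and `σ ρ² = g - K ρ`
  have hyx : cauchyRadius K σ' g ≤ cauchyRadius K σ g := by
    by_contra! hxy
    have : σ * cauchyRadius K σ g ^ 2 < σ * cauchyRadius K σ' g ^ 2 := by gcongr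
    have : σ * cauchyRadius K σ' g ^ 2 ≤ σ' * cauchyRadius K σ' g ^ 2 := by gcongr
    have : K * cauchyRadius K σ g ≤ K * cauchyRadius K σ' g := by gcongr
    linarith
  have : K * cauchyRadius K σ' g ≤ K * cauchyRadius K σ g := by gcongr
  linarith

lemma mul_sq_cauchyRadius_le (hK : 0 ≤ K) (hσ : 0 < σ) (hσσ' : σ ≤ σ') (hg : 0 ≤ g)
    (hgg' : g ≤ g') : σ * cauchyRadius K σ g ^ 2 ≤ σ' * cauchyRadius K σ' g' ^ 2 :=
  calc σ * cauchyRadius K σ g ^ 2 ≤ σ * cauchyRadius K σ g' ^ 2 := by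
        gcongr
        · exact cauchyRadius_nonneg hσ.le hg
        · exact monotone_cauchyRadius hσ.le hgg'
    _ ≤ σ' * cauchyRadius K σ' g' ^ 2 :=
        mul_sq_cauchyRadius_le_of_le_left hK hσ hσσ' (hg.trans hgg')

end CauchyRadius

section ModelError

variable {δg δH σ κ a c : ℝ}

lemma error_bound_sub_cubic_nonpos_of_le (hσ : 0 ≤ σ) (hc : 0 ≤ c) (hca : c ≤ a)
    (hδg : δg ≤ σ * c ^ 2 / 24) (hδH : δH ≤ σ * c / 12) :
    δg * a + (1 / 2) * δH * a ^ 2 - σ / 12 * a ^ 3 ≤ 0 := by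
  have ha : 0 ≤ a := hc.trans hca
  have hφ : δg + (1 / 2) * δH * a - σ / 12 * a ^ 2 ≤ 0 := by
    nlinarith [mul_le_mul_of_nonneg_left hδH ha, mul_le_mul_of_nonneg_left hca hc,
      mul_le_mul_of_nonneg_left hca ha]
  nlinarith [mul_nonpos_of_nonneg_of_nonpos ha hφ]

lemma error_bound_le_error_bound_cauchy (hδg₀ : 0 ≤ δg) (hδH₀ : 0 ≤ δH) (hσ : 0 ≤ σ)
    (hκ : κ ≤ -(σ / 12)) (ha : 0 ≤ a) (hc : 0 ≤ c)
    (hδg : δg ≤ σ * c ^ 2 / 24) (hδH : δH ≤ σ * c / 12) :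
    δg * a + (1 / 2) * δH * a ^ 2 + κ * a ^ 3 ≤ δg * c + (1 / 2) * δH * c ^ 2 := by
  have hcube : κ * a ^ 3 ≤ -(σ / 12) * a ^ 3 := by gcongr
  rcases le_total a c with hac | hca
  · have : -(σ / 12) * a ^ 3 ≤ 0 := by nlinarith [pow_nonneg ha 3]
    have : δg * a ≤ δg * c := by gcongr
    have : δH * a ^ 2 ≤ δH * c ^ 2 := by gcongr
    linarith
  · have := error_bound_sub_cubic_nonpos_of_le hσ hc hca hδg hδH
    have : 0 ≤ δg * c + (1 / 2) * δH * c ^ 2 := by positivity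
    linarith

end ModelError

/-- Key technical inequality for optimal ARC complexity: the model-error upper
bound at any step `s` is dominated by its value at the Cauchy step. -/
theorem arc_error_dominated_by_cauchy
    {d : ℕ} (δg δH L σ K ε ε' : ℝ)
    (hδg : 0 < δg) (hδH : 0 < δH) (hL : 0 < L)
    (hσ : 2*L ≤ σ) (hK : 0 ≤ K) (hε : 0 < ε) (hε' : ε ≤ ε')
    (s sC : EuclideanSpace ℝ (Fin d))
    (hsC : ‖sC‖ = (Real.sqrt (K^2 + 4*σ*ε') - K) / (2*σ))
    (hδH' : δH ≤ (Real.sqrt (K^2 + 8*L*ε) - K) / 24)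
    (hδg' : δg ≤ (Real.sqrt (K^2 + 8*L*ε) - K)^2 / (192*L)) :
    δg*‖s‖ + (1/2)*δH*‖s‖^2 + (L/2 - σ/3)*‖s‖^3
      ≤ δg*‖sC‖ + (1/2)*δH*‖sC‖^2 := by
  have h2L : 0 < 2 * L := by positivity
  set ρ := cauchyRadius K (2 * L) ε
  have hsqrt : √(K ^ 2 + 8 * L * ε) - K = 2 * (2 * L * ρ) := by
    rw [mul_cauchyRadius h2L.ne']
    ring_nf
  rw [hsqrt] at hδH' hδg'
  rw [← cauchyRadius] at hsC
  have hδH_le : δH ≤ σ * ‖sC‖ / 12 := by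
    rw [hsC]
    linarith [mul_cauchyRadius_le (K := K) h2L hσ hε.le hε']
  have hδg_le : δg ≤ σ * ‖sC‖ ^ 2 / 24 := by
    have hρ : (2 * (2 * L * ρ)) ^ 2 / (192 * L) = 2 * L * ρ ^ 2 / 24 := by
      field_simp
      ring
    rw [hsC]
    linarith [mul_sq_cauchyRadius_le hK h2L hσ hε.le hε']
  exact error_bound_le_error_bound_cauchy hδg.le hδH.le (h2L.le.trans hσ) (by linarith)
    (norm_nonneg s) (norm_nonneg sC) hδg_le hδH_le
end

section
/- Under the same setup (s* global minimizer of the cubic model with H + σ‖s*‖I ⪰ 0, ‖H − ∇²F(x)‖ ≤ δ_H, ∇²F L-Lipschitz), we have λ_min(∇²F(x + s*)) ≥ −δ_H − (σ + L)‖s*‖, hence ‖s*‖ ≥ −(δ_H + λ_min(∇²F(x+s*)))/(σ + L). -/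
open scoped RealInnerProductSpace

/-! Split `∇²F(x + s*) = H + (∇²F(x) − H) + (∇²F(x + s*) − ∇²F(x))`. On a unit vector the quadratic
form of `H` is at least `−σ‖s*‖` by the second-order optimality condition, and the two
perturbations lower it by at most their operator norms, `δ_H` and (by the Lipschitz bound on the
Hessian) `L‖s*‖`. Applied to a unit vector attaining `λ_min`, this is the first claim; the second
is its rearrangement, as `σ + L > 0`. -/

theorem ContinuousLinearMap.inner_map_self_sub_le_of_norm_sub_le
    {E : Type*} [NormedAddCommGroup E] [InnerProductSpace ℝ E]
    {A B : E →L[ℝ] E} {c : ℝ} (h : ‖A - B‖ ≤ c) (v : E) :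
    ⟪v, B v⟫ - c * ‖v‖ ^ 2 ≤ ⟪v, A v⟫ :=
  calc ⟪v, B v⟫ - c * ‖v‖ ^ 2
      ≤ ⟪v, B v⟫ - ⟪v, (B - A) v⟫ := by
        gcongr
        calc ⟪v, (B - A) v⟫ ≤ ‖v‖ * ‖(B - A) v‖ := real_inner_le_norm _ _
          _ ≤ ‖v‖ * (‖B - A‖ * ‖v‖) := by gcongr; exact (B - A).le_opNorm v
          _ = ‖A - B‖ * ‖v‖ ^ 2 := by rw [norm_sub_rev]; ring
          _ ≤ c * ‖v‖ ^ 2 := by gcongr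
    _ = ⟪v, A v⟫ := by
        rw [sub_apply, inner_sub_right]; ring

theorem cubic_minimizer_second_order_bound_general
    {d : ℕ} (F : EuclideanSpace ℝ (Fin d) → ℝ)
    (x sStar : EuclideanSpace ℝ (Fin d))
    (H : EuclideanSpace ℝ (Fin d) →L[ℝ] EuclideanSpace ℝ (Fin d))
    (L σ δH lamMin : ℝ)
    (hL : 0 < L) (hσ : 0 < σ)
    (hLip : ∀ y z : EuclideanSpace ℝ (Fin d),
      ‖fderiv ℝ (gradient F) y - fderiv ℝ (gradient F) z‖ ≤ L * ‖y - z‖)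
    (hH : ‖H - fderiv ℝ (gradient F) x‖ ≤ δH)
    (hsoc : ∀ v : EuclideanSpace ℝ (Fin d),
      0 ≤ ⟪v, H v⟫ + σ * ‖sStar‖ * ‖v‖^2)
    (hlam_attained : ∃ v : EuclideanSpace ℝ (Fin d), ‖v‖ = 1 ∧
      ⟪v, fderiv ℝ (gradient F) (x + sStar) v⟫ = lamMin) :
    lamMin ≥ -δH - (σ + L) * ‖sStar‖
    ∧ ‖sStar‖ ≥ -(δH + lamMin) / (σ + L) := by
  obtain ⟨v, hv, rfl⟩ := hlam_attained
  have hHess : ‖fderiv ℝ (gradient F) (x + sStar) - fderiv ℝ (gradient F) x‖ ≤ L * ‖sStar‖ := by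
    simpa using hLip (x + sStar) x
  have hModel : ‖fderiv ℝ (gradient F) x - H‖ ≤ δH := by rwa [norm_sub_rev]
  have hFirst : ⟪v, fderiv ℝ (gradient F) (x + sStar) v⟫ ≥ -δH - (σ + L) * ‖sStar‖ := by
    have hLipStep := ContinuousLinearMap.inner_map_self_sub_le_of_norm_sub_le hHess v
    have hModelStep := ContinuousLinearMap.inner_map_self_sub_le_of_norm_sub_le hModel v
    have hSoc := hsoc v
    rw [hv, one_pow, mul_one] at hLipStep hModelStep hSoc
    linarith
  refine ⟨hFirst, ?_⟩
  rw [ge_iff_le, div_le_iff₀ (by positivity)]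
  linarith

/-- Second-order guarantee at the cubic-model minimizer:
`λ_min(∇²F(x+s*)) ≥ −δ_H − (σ+L)‖s*‖`, hence
`‖s*‖ ≥ −(δ_H + λ_min(∇²F(x+s*)))/(σ+L)`. -/
theorem cubic_minimizer_second_order_bound
    {d : ℕ} (F : EuclideanSpace ℝ (Fin d) → ℝ)
    (x g sStar : EuclideanSpace ℝ (Fin d))
    (H : EuclideanSpace ℝ (Fin d) →L[ℝ] EuclideanSpace ℝ (Fin d))
    (L σ δg δH lamMin : ℝ)
    (hL : 0 < L) (hσ : 0 < σ) (hδg : 0 ≤ δg) (hδH : 0 ≤ δH)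
    (hF : ContDiff ℝ 2 F)
    (hHsym : ∀ u v, ⟪H u, v⟫ = ⟪u, H v⟫)
    (hLip : ∀ y z : EuclideanSpace ℝ (Fin d),
      ‖fderiv ℝ (gradient F) y - fderiv ℝ (gradient F) z‖ ≤ L * ‖y - z‖)
    (hg : ‖g - gradient F x‖ ≤ δg)
    (hH : ‖H - fderiv ℝ (gradient F) x‖ ≤ δH)
    (hfoc : g + H sStar + (σ * ‖sStar‖) • sStar = 0)
    (hsoc : ∀ v : EuclideanSpace ℝ (Fin d),
      0 ≤ ⟪v, H v⟫ + σ * ‖sStar‖ * ‖v‖^2)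
    (hlam_attained : ∃ v : EuclideanSpace ℝ (Fin d), ‖v‖ = 1 ∧
      ⟪v, fderiv ℝ (gradient F) (x + sStar) v⟫ = lamMin)
    (hlam_lb : ∀ v : EuclideanSpace ℝ (Fin d), ‖v‖ = 1 →
      lamMin ≤ ⟪v, fderiv ℝ (gradient F) (x + sStar) v⟫) :
    lamMin ≥ -δH - (σ + L) * ‖sStar‖
    ∧ ‖sStar‖ ≥ -(δH + lamMin) / (σ + L) :=
  cubic_minimizer_second_order_bound_general F x sStar H L σ δH lamMin hL hσ hLip hH hsoc
    hlam_attained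
end
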